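/- Sample a forest uniformly from the set of plane forests with ranked roots having ECD s̃ (with z̃ roots, m̃ vertices, maximum children count Δ̃), and let X_j denote the number of children of the root of the j-th tree. Then for distinct indices j₁ ≠ j₂ and values i₁ ≠ i₂, P(X_{j₁} = i₁, X_{j₂} = i₂) = (z̃ − 2 + i₁ + i₂)·s̃_{i₁}·s̃_{i₂} / (z̃·(m̃−1)·(m̃−2)). -/

import Mathlib

open scoped BigOperators Classical
open Filter MeasureTheory

namespace Paper

inductive PlaneTree : Type
  | node : List PlaneTree → PlaneTree

namespace PlaneTree

def deg : PlaneTree → ℕ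
  | node ts => ts.length

mutual
  def pos : PlaneTree → List (List ℕ)
    | node ts => [] :: posF 0 ts
  def posF : ℕ → List PlaneTree → List (List ℕ)
    | _, [] => []
    | i, t :: ts => (pos t).map (fun q => i :: q) ++ posF (i + 1) ts
end

mutual
  def dfsDeg : PlaneTree → List ℕ
    | node ts => ts.length :: dfsDegF ts
  def dfsDegF : List PlaneTree → List ℕ
    | [] => []
    | t :: ts => dfsDeg t ++ dfsDegF ts
end

def subtreeAt : PlaneTree → List ℕ → Option PlaneTree
  | t, [] => some t
  | node ts, i :: p =>
    match ts[i]? with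
    | some t' => subtreeAt t' p
    | none => none

def numChild (t : PlaneTree) (p : List ℕ) : ℕ := ((subtreeAt t p).map deg).getD 0

def IsVertex (t : PlaneTree) (p : List ℕ) : Prop := (subtreeAt t p).isSome

def IsLeaf (t : PlaneTree) (p : List ℕ) : Prop := (subtreeAt t p).isSome ∧ numChild t p = 0

/-- number of vertices of `t` having exactly `i` children (empirical children distribution) -/
def ecd (t : PlaneTree) (i : ℕ) : ℕ :=
  ((pos t).filter fun p => decide (numChild t p = i)).length

/-- ECD of a plane forest with ranked roots -/
def ecdF (f : List PlaneTree) (i : ℕ) : ℕ := (f.map fun t => ecd t i).sum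

/-- number of children of the `j`-th root of a forest -/
def rootDeg (f : List PlaneTree) (j : ℕ) : ℕ := deg (f.getD j (node []))

/-- the set of plane forests with ranked roots with ECD `s` -/
def forestSet (s : ℕ → ℕ) : Set (List PlaneTree) := {f | ∀ i, ecdF f i = s i}

/-- the set of plane trees with ECD `s` -/
def treeSet (s : ℕ → ℕ) : Set PlaneTree := {t | ∀ i, ecd t i = s i}

/-- strict depth-first (preorder) order on positions -/
def dfLT (p q : List ℕ) : Prop := List.Lex (· < ·) p q

def parent (p : List ℕ) : List ℕ := p.dropLast

/-- `q` is a strict ancestor of `p`, i.e. `q ∈ [ρ, p)` -/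
def StrictAnc (q p : List ℕ) : Prop := q <+: p ∧ q ≠ p

/-- admissible (ordered) pair of leaves -/
def Admissible (t : PlaneTree) (u v : List ℕ) : Prop :=
  IsLeaf t u ∧ IsLeaf t v ∧ 2 ≤ v.length ∧
    StrictAnc (parent (parent v)) (parent u) ∧ dfLT (parent u) (parent v)

def ASet (t : PlaneTree) : Set (List ℕ × List ℕ) := {uv | Admissible t uv.1 uv.2}

def fA (t : PlaneTree) (u : List ℕ) : Set (List ℕ) := {v | Admissible t u v}

def B2 (t : PlaneTree) (u : List ℕ) : Set (List ℕ) :=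
  {v | IsVertex t v ∧ 2 ≤ v.length ∧ StrictAnc (parent (parent v)) u}

noncomputable def leafFinset (t : PlaneTree) : Finset (List ℕ) :=
  ((pos t).toFinset).filter fun p => IsLeaf t p

def leafOf {k : ℕ} (w : Fin k → List ℕ × List ℕ) (y : Fin k × Bool) : List ℕ :=
  if y.2 then (w y.1).1 else (w y.1).2

/-- ordered `k`-tuples of admissible pairs using `2k` distinct leaves -/
def AkOrd (t : PlaneTree) (k : ℕ) : Set (Fin k → List ℕ × List ℕ) :=
  {w | (∀ a, Admissible t (w a).1 (w a).2) ∧ Function.Injective (leafOf w)}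

/-- unordered collections of `k` admissible pairs using `2k` distinct leaves -/
def Ak (t : PlaneTree) (k : ℕ) : Set (Finset (List ℕ × List ℕ)) :=
  {x | x.card = k ∧ (∀ uv ∈ x, Admissible t uv.1 uv.2) ∧
    Set.InjOn (fun y : (List ℕ × List ℕ) × Bool => if y.2 then y.1.1 else y.1.2)
      {y | y.1 ∈ x}}

/-- the set `T_s^(k)` of pairs of a plane tree with ECD `s` and a set of `k` admissible pairs -/
def Tsk (s : ℕ → ℕ) (k : ℕ) : Set (PlaneTree × Finset (List ℕ × List ℕ)) :=
  {tx | (∀ i, ecd tx.1 i = s i) ∧ tx.2 ∈ Ak tx.1 k}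

end PlaneTree

/-- labeled plane trees -/
inductive LTree : Type
  | node : ℕ → List LTree → LTree

namespace LTree

mutual
  def shape : LTree → PlaneTree
    | node _ ts => .node (shapeF ts)
  def shapeF : List LTree → List PlaneTree
    | [] => []
    | t :: ts => shape t :: shapeF ts
end

mutual
  def dfsLab : LTree → List ℕ
    | node a ts => a :: dfsLabF ts
  def dfsLabF : List LTree → List ℕ
    | [] => []
    | t :: ts => dfsLab t ++ dfsLabF ts
end

mutual
  def dfsDeg : LTree → List ℕ
    | node _ ts => ts.length :: dfsDegF ts
  def dfsDegF : List LTree → List ℕ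
    | [] => []
    | t :: ts => dfsDeg t ++ dfsDegF ts
end

def subtreeAt : LTree → List ℕ → Option LTree
  | t, [] => some t
  | node _ ts, i :: p =>
    match ts[i]? with
    | some t' => subtreeAt t' p
    | none => none

def labelAt (t : LTree) (p : List ℕ) : ℕ :=
  ((subtreeAt t p).map fun u => match u with | node a _ => a).getD 0

end LTree

/-- partial-sum steps of the permuted walk -/
def steps {m : ℕ} (c : Fin m → ℕ) (π : Equiv.Perm (Fin m)) : List ℤ :=
  List.ofFn fun i => (c (π i) : ℤ) - 1

/-- first index `j ∈ [1, length]` at which the partial sums attain their minimum -/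
noncomputable def firstMinIdx (l : List ℤ) : ℕ :=
  (((Finset.Icc 1 l.length).filter fun j =>
      ∀ j' ∈ Finset.Icc 1 l.length, (l.take j).sum ≤ (l.take j').sum).min).untopD 0

/-- the DFS vertex sequence obtained by rotating the uniformly permuted vertex
sequence at the first minimum of its Łukasiewicz-type walk (Vervaat transform) -/
noncomputable def rotSeq {m : ℕ} (c : Fin m → ℕ) (π : Equiv.Perm (Fin m)) : List (Fin m) :=
  (List.ofFn fun i => π i).rotate (firstMinIdx (steps c π))

/-- the degree of a vertex in a (simple) edge set -/
def degIn (E : Finset (Sym2 ℕ)) (v : ℕ) : ℕ := (E.filter fun e => v ∈ e).card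

/-- degree of a vertex in a multigraph given by an edge multiset (loops count twice) -/
def mdeg (E : Multiset (Sym2 ℕ)) (v : ℕ) : ℕ :=
  (E.map fun e => (if v ∈ e then 1 else 0) + (if e = s(v, v) then 1 else 0)).sum

/-- connectivity of a (multi)graph on vertex set `V` with edges `E` -/
def ConnOn (V : Finset ℕ) (E : Set (Sym2 ℕ)) : Prop :=
  ∀ a ∈ V, ∀ b ∈ V, Relation.ReflTransGen (fun a b => s(a, b) ∈ E) a b

/-- the set of simple connected labeled graphs on `{1, …, m}` with degree sequence `d` -/
def GconSet (m : ℕ) (d : ℕ → ℕ) : Set (Finset (Sym2 ℕ)) :=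
  {E | (∀ e ∈ E, ¬ e.IsDiag) ∧ (∀ e ∈ E, ∀ v ∈ e, v ∈ Finset.Icc 1 m) ∧
       (∀ v ∈ Finset.Icc 1 m, degIn E v = d v) ∧ ConnOn (Finset.Icc 1 m) (E : Set (Sym2 ℕ))}

/-- ECD of the children sequence `(d̃₂ − 1, …, d̃_{m̃} − 1, 0, …, 0)` (with `2k` zeros) -/
def ecdFromDeg (m k : ℕ) (d : ℕ → ℕ) (i : ℕ) : ℕ :=
  ((Finset.Icc 2 m).filter fun j => d j = i + 1).card + if i = 0 then 2 * k else 0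

/-- `≪` order on admissible pairs -/
def pairLT (a b : List ℕ × List ℕ) : Prop :=
  PlaneTree.dfLT (PlaneTree.parent a.1) (PlaneTree.parent b.1) ∨
    (PlaneTree.parent a.1 = PlaneTree.parent b.1 ∧
      PlaneTree.dfLT (PlaneTree.parent a.2) (PlaneTree.parent b.2))

/-- labeled elements of `T_s^(k)` as in the sampling algorithm: a labeled plane tree whose
labels are `{2, …, m̃ + 2k}`, in which the vertex labeled `j ≤ m̃` has `d̃_j − 1` children and
the vertices labeled `> m̃` are leaves, together with a `≪`-increasing tuple of `k` admissible
pairs of leaves with distinct leaves, the `j`-th pair carrying labels `(m̃+2j−1, m̃+2j)`. -/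
def IsLabeledElement (m k : ℕ) (d : ℕ → ℕ) (t : LTree)
    (x : Fin k → List ℕ × List ℕ) : Prop :=
  (LTree.dfsLab t).Perm (List.range' 2 (m - 1 + 2 * k)) ∧
  (∀ p ∈ PlaneTree.pos (LTree.shape t),
    PlaneTree.numChild (LTree.shape t) p =
      (if 2 ≤ LTree.labelAt t p ∧ LTree.labelAt t p ≤ m then d (LTree.labelAt t p) - 1 else 0)) ∧
  (∀ j, PlaneTree.Admissible (LTree.shape t) (x j).1 (x j).2) ∧
  Function.Injective (PlaneTree.leafOf x) ∧
  (∀ j j' : Fin k, j < j' → pairLT (x j) (x j')) ∧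
  (∀ j : Fin k, LTree.labelAt t (x j).1 = m + 2 * (j : ℕ) + 1 ∧
      LTree.labelAt t (x j).2 = m + 2 * (j : ℕ) + 2)

/-- the edge multiset of the graph `I(t, x)`: tree edges, with the leaves of the admissible
pairs deleted and an edge joining the two parents of each admissible pair added -/
noncomputable def Iedges (t : LTree) {k : ℕ} (x : Fin k → List ℕ × List ℕ) :
    Multiset (Sym2 ℕ) :=
  (↑(((PlaneTree.pos (LTree.shape t)).filter fun p =>
        decide (p ≠ ([] : List ℕ) ∧ ∀ j, p ≠ (x j).1 ∧ p ≠ (x j).2)).map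
      fun p => s(LTree.labelAt t (PlaneTree.parent p), LTree.labelAt t p)) : Multiset (Sym2 ℕ))
  + ↑(List.ofFn fun j =>
      s(LTree.labelAt t (PlaneTree.parent (x j).1), LTree.labelAt t (PlaneTree.parent (x j).2)))

/- Brownian excursion: Gaussian/Bessel kernels and finite-dimensional densities -/
noncomputable def gaussD (s x : ℝ) : ℝ := Real.exp (-(x ^ 2) / (2 * s)) / Real.sqrt (2 * Real.pi * s)

noncomputable def killedK (s x y : ℝ) : ℝ := gaussD s (y - x) - gaussD s (y + x)

noncomputable def bes3K (s x y : ℝ) : ℝ := (y / x) * killedK s x y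

noncomputable def exStart (t x : ℝ) : ℝ :=
  Real.sqrt (2 / Real.pi) * x ^ 2 * t ^ (-(3 : ℝ) / 2) * Real.exp (-(x ^ 2) / (2 * t))

noncomputable def exEnd (s x : ℝ) : ℝ := (2 / s) * gaussD s x

/-- finite-dimensional density of the standard Brownian excursion at times `t 0 < … < t n` -/
noncomputable def exFdd {n : ℕ} (t : Fin (n + 1) → ℝ) (x : Fin (n + 1) → ℝ) : ℝ :=
  if ∀ i, 0 < x i then
    Real.sqrt (Real.pi / 2) * exStart (t 0) (x 0) *
      (∏ i : Fin n, bes3K (t i.succ - t i.castSucc) (x i.castSucc) (x i.succ)) *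
      exEnd (1 - t (Fin.last n)) (x (Fin.last n))
  else 0

/-- `e` is a standard Brownian excursion on `[0,1]`: continuous nonnegative paths vanishing at
the endpoints, positive inside, with the excursion finite-dimensional densities. -/
def IsStdBrownianExcursion {Ω : Type*} [MeasureSpace Ω] (e : Ω → ℝ → ℝ) : Prop :=
  (∀ ω, Continuous (e ω)) ∧ (∀ ω, e ω 0 = 0) ∧ (∀ ω, e ω 1 = 0) ∧
  (∀ ω, ∀ x ∈ Set.Ioo (0 : ℝ) 1, 0 < e ω x) ∧
  (∀ t : ℝ, Measurable fun ω => e ω t) ∧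
  ∀ (n : ℕ) (t : Fin (n + 1) → ℝ), StrictMono t → 0 < t 0 → t (Fin.last n) < 1 →
    Measure.map (fun ω i => e ω (t i)) (volume : Measure Ω)
      = volume.withDensity fun x => ENNReal.ofReal (exFdd t x)

/-- `j`-th smallest value (0-based) among `ω 0, …, ω (m−1)` -/
noncomputable def orderStat {m : ℕ} (ω : Fin m → ℝ) (j : ℕ) : ℝ :=
  ((Multiset.map ω Finset.univ.val).sort (· ≤ ·)).getD j 0

end Paper

/-!
Deleting the `j`-th root of a forest with ECD `s`, when that root has `i` children, and
promoting its children to roots in its place is a bijection onto the forests with ECD `s - δᵢ`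
(which have `z - 1 + i` trees). Splitting by the number of children of the first root and
inducting on the number of vertices `m`, this gives `|forestSet s| · ∏ sᵢ! = z · (m - 1)!`.
Deleting the roots `j₂` and then `j₁` (with `j₁ < j₂`, so that `j₁` does not move) identifies
the joint event with the forests with ECD `s - δ_{i₂} - δ_{i₁}`, and the ratio of the two counts
is the claimed probability.
-/

open Finset
open scoped Nat

local notation:max "δ" i:max => (Pi.single i 1 : ℕ → ℕ)

namespace Paper.PlaneTree

def children : PlaneTree → List PlaneTree
  | node ts => ts

lemma ecdF_cons (t : PlaneTree) (f : List PlaneTree) (i : ℕ) :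
    ecdF (t :: f) i = ecd t i + ecdF f i := by
  simp [ecdF]

lemma ecdF_append (f g : List PlaneTree) (i : ℕ) :
    ecdF (f ++ g) i = ecdF f i + ecdF g i := by
  simp [ecdF]

/-- `ts` is the suffix of `us` from index `n` on, so `posF n ts` lists the positions of
`node us` lying in its subtrees `n, n + 1, …`. -/
lemma length_filter_posF (i : ℕ) (us : List PlaneTree) :
    ∀ (ts : List PlaneTree) (n : ℕ), (∀ k, us[n + k]? = ts[k]?) →
      ((posF n ts).filter fun p => decide (numChild (node us) p = i)).length = ecdF ts i
  | [], _, _ => by simp [posF, ecdF]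
  | t :: ts, n, h => by
    have ht : us[n]? = some t := by simpa using h 0
    have htail : ∀ k, us[n + 1 + k]? = ts[k]? := fun k => by
      simpa [Nat.add_assoc, Nat.add_comm 1 k] using h (k + 1)
    rw [posF, List.filter_append, List.length_append, List.filter_map, List.length_map,
      ecdF_cons, length_filter_posF i us ts (n + 1) htail, ecd]
    congr 2
    -- the remaining `congr` matches two `Decidable` instances of the same proposition
    exact List.filter_congr fun q _ => by simp [numChild, subtreeAt, ht]; congr

lemma ecd_node (ts : List PlaneTree) (i : ℕ) :
    ecd (node ts) i = (if ts.length = i then 1 else 0) + ecdF ts i := by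
  rw [ecd, pos, List.filter_cons, ← length_filter_posF i ts ts 0 (by simp)]
  by_cases h : ts.length = i <;> simp [numChild, subtreeAt, deg, h, Nat.add_comm]

mutual
theorem count_dfsDeg (i : ℕ) : ∀ t : PlaneTree, (dfsDeg t).count i = ecd t i
  | node ts => by
    rw [dfsDeg, List.count_cons, count_dfsDegF i ts, ecd_node]
    by_cases h : ts.length = i <;> simp [h, Nat.add_comm]

theorem count_dfsDegF (i : ℕ) : ∀ ts : List PlaneTree, (dfsDegF ts).count i = ecdF ts i
  | [] => by simp [dfsDegF, ecdF]
  | t :: ts => by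
    rw [dfsDegF, List.count_append, count_dfsDeg i t, count_dfsDegF i ts, ecdF_cons]
end

mutual
theorem length_dfsDeg : ∀ t : PlaneTree, (dfsDeg t).length = 1 + (dfsDeg t).sum
  | node ts => by
    rw [dfsDeg, List.length_cons, List.sum_cons, length_dfsDegF ts]
    omega

theorem length_dfsDegF : ∀ ts : List PlaneTree, (dfsDegF ts).length = ts.length + (dfsDegF ts).sum
  | [] => by simp [dfsDegF]
  | t :: ts => by
    rw [dfsDegF, List.length_append, List.sum_append, length_dfsDeg t, length_dfsDegF ts,
      List.length_cons]
    omega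
end

lemma sum_range_count {M : ℕ} (l : List ℕ) (h : ∀ a ∈ l, a < M) :
    ∑ i ∈ range M, l.count i = l.length := by
  induction l with
  | nil => simp
  | cons a l ih =>
    simp_all [List.count_cons, sum_add_distrib]

lemma sum_range_mul_count {M : ℕ} (l : List ℕ) (h : ∀ a ∈ l, a < M) :
    ∑ i ∈ range M, i * l.count i = l.sum := by
  induction l with
  | nil => simp
  | cons a l ih =>
    simp_all [List.count_cons, mul_add, sum_add_distrib, Nat.add_comm]

/-- The forests with ECD `s` have `m` vertices and, by the handshake identity, `z` trees. -/
def ECDCounts (s : ℕ → ℕ) (M z m : ℕ) : Prop :=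
  (∀ i, M ≤ i → s i = 0) ∧ m = ∑ i ∈ range M, s i ∧ m = z + ∑ i ∈ range M, i * s i

lemma length_eq_of_mem_forestSet {s : ℕ → ℕ} {M z m : ℕ} (hs : ECDCounts s M z m)
    {f : List PlaneTree} (hf : f ∈ forestSet s) : f.length = z := by
  obtain ⟨hsupp, hm, hz⟩ := hs
  have hcount : ∀ i, (dfsDegF f).count i = s i := fun i => (count_dfsDegF i f).trans (hf i)
  have hlt : ∀ a ∈ dfsDegF f, a < M := fun a ha => by
    by_contra h
    have := List.count_pos_iff.2 ha
    rw [hcount, hsupp a (by omega)] at this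
    omega
  have := length_dfsDegF f
  simp only [← sum_range_count _ hlt, ← sum_range_mul_count _ hlt, hcount] at this
  omega

lemma ecd_le_ecdF_of_mem {t : PlaneTree} {f : List PlaneTree} (ht : t ∈ f) (i : ℕ) :
    ecd t i ≤ ecdF f i :=
  List.le_sum_of_mem (List.mem_map_of_mem ht)

lemma ecd_deg_pos : ∀ t : PlaneTree, 0 < ecd t (deg t)
  | node ts => by simp [ecd_node, deg]

lemma apply_rootDeg_ne_zero {s : ℕ → ℕ} {f : List PlaneTree} (hf : f ∈ forestSet s)
    {j : ℕ} (hj : j < f.length) : s (rootDeg f j) ≠ 0 := by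
  rw [← hf, rootDeg, List.getD_eq_getElem _ _ hj]
  exact (ecd_deg_pos _).trans_le (ecd_le_ecdF_of_mem (List.getElem_mem hj) _) |>.ne'

def removeRoot (j : ℕ) (f : List PlaneTree) : List PlaneTree :=
  f.take j ++ children (f.getD j (node [])) ++ f.drop (j + 1)

def graftRoot (j i : ℕ) (g : List PlaneTree) : List PlaneTree :=
  g.take j ++ node ((g.drop j).take i) :: g.drop (j + i)

lemma removeRoot_of_getElem {f : List PlaneTree} {j : ℕ} (hj : j < f.length) {ts : List PlaneTree}
    (h : f[j] = node ts) : removeRoot j f = f.take j ++ ts ++ f.drop (j + 1) := by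
  rw [removeRoot, List.getD_eq_getElem _ _ hj, h, children]

lemma graftRoot_removeRoot {f : List PlaneTree} {j : ℕ} (hj : j < f.length) :
    graftRoot j (rootDeg f j) (removeRoot j f) = f := by
  rcases h : f[j] with ⟨ts⟩
  have hA : (f.take j).length = j := List.length_take_of_le hj.le
  have hdeg : rootDeg f j = ts.length := by rw [rootDeg, List.getD_eq_getElem _ _ hj, h, deg]
  rw [removeRoot_of_getElem hj h, hdeg, graftRoot, List.append_assoc, List.take_left' hA,
    ← List.drop_drop (i := ts.length) (j := j), List.drop_left' hA, List.take_left' rfl,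
    List.drop_left' rfl, ← h, List.getElem_cons_drop, List.take_append_drop]

lemma getD_append_cons {α : Type*} {A B : List α} {x d : α} {j : ℕ} (hA : A.length = j) :
    (A ++ x :: B).getD j d = x := by
  rw [List.getD_append_right _ _ _ _ hA.le, hA, Nat.sub_self, List.getD_cons_zero]

lemma removeRoot_graftRoot {g : List PlaneTree} {i j : ℕ} (h : j + i ≤ g.length) :
    removeRoot j (graftRoot j i g) = g := by
  have hA : (g.take j).length = j := List.length_take_of_le (by omega)
  rw [removeRoot, graftRoot, List.take_left' hA, getD_append_cons hA, children,
    ← List.drop_drop (i := 1), List.drop_left' hA, List.drop_succ_cons, List.drop_zero,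
    ← List.drop_drop, List.append_assoc, List.take_append_drop, List.take_append_drop]

lemma length_removeRoot {f : List PlaneTree} {j : ℕ} (hj : j < f.length) :
    (removeRoot j f).length = f.length - 1 + rootDeg f j := by
  rcases h : f[j] with ⟨ts⟩
  rw [removeRoot_of_getElem hj h, rootDeg, List.getD_eq_getElem _ _ hj, h, deg]
  simp only [List.length_append, List.length_take, List.length_drop]
  omega

lemma rootDeg_graftRoot {g : List PlaneTree} {i j : ℕ} (h : j + i ≤ g.length) :
    rootDeg (graftRoot j i g) j = i := by
  have hA : (g.take j).length = j := List.length_take_of_le (by omega)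
  rw [rootDeg, graftRoot, getD_append_cons hA, deg, List.length_take, List.length_drop]
  omega

lemma ecdF_graftRoot {g : List PlaneTree} {i j : ℕ} (h : j + i ≤ g.length) (k : ℕ) :
    ecdF (graftRoot j i g) k = ecdF g k + δ i k := by
  have hlen : ((g.drop j).take i).length = i := by simp; omega
  conv_rhs => rw [← List.take_append_drop j g, ← List.take_append_drop i (g.drop j),
    List.drop_drop]
  rw [graftRoot, ecdF_append, ecdF_cons, ecd_node, hlen, ecdF_append, ecdF_append]
  simp only [Pi.single_apply, eq_comm (a := i)]
  ring

lemma rootDeg_removeRoot_of_lt {f : List PlaneTree} {j k : ℕ} (h : k < j) :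
    rootDeg (removeRoot j f) k = rootDeg f k := by
  by_cases hk : k < f.length
  · have hk' : k < (f.take j).length := by simp; omega
    rw [rootDeg, rootDeg, removeRoot, List.append_assoc, List.getD_append _ _ _ _ hk',
      List.getD_eq_getElem?_getD, List.getElem?_take, if_pos h, ← List.getD_eq_getElem?_getD]
  · have hf : removeRoot j f = f := by
      rw [removeRoot, List.take_of_length_le (by omega), List.getD_eq_default _ _ (by omega),
        children, List.drop_eq_nil_of_le (by omega), List.append_nil, List.append_nil]
    rw [hf]

section ECDCounts

variable {s : ℕ → ℕ} {M z m : ℕ}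

lemma ECDCounts.lt_of_ne_zero (hs : ECDCounts s M z m) {i : ℕ} (hi : s i ≠ 0) : i < M := by
  by_contra h
  exact hi (hs.1 i (by omega))

lemma sub_single_add_single {i : ℕ} (hi : s i ≠ 0) : s - δ i + δ i = s := by
  funext j
  by_cases h : j = i
  · subst h; simp; omega
  · simp [h]

lemma ECDCounts.sub_single (hs : ECDCounts s M z m) (hz : 0 < z) {i : ℕ} (hi : s i ≠ 0) :
    ECDCounts (s - δ i) M (z - 1 + i) (m - 1) := by
  have hiM : i ∈ range M := mem_range.2 (hs.lt_of_ne_zero hi)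
  obtain ⟨hsupp, hm, hzm⟩ := hs
  rw [← sub_single_add_single hi] at hm hzm
  simp only [Pi.add_apply, mul_add, sum_add_distrib, Pi.single_apply, mul_ite, mul_one, mul_zero,
    sum_ite_eq', if_pos hiM] at hm hzm
  refine ⟨fun j hj => ?_, by omega, by omega⟩
  simp [hsupp j hj]

lemma prod_factorial_eq_mul_prod_factorial_sub_single {i : ℕ} (hiM : i < M) (hi : s i ≠ 0) :
    ∏ j ∈ range M, (s j)! = s i * ∏ j ∈ range M, ((s - δ i) j)! := by
  have hmem : i ∈ range M := mem_range.2 hiM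
  rw [prod_eq_mul_prod_sdiff_singleton_of_mem hmem, prod_eq_mul_prod_sdiff_singleton_of_mem hmem,
    Pi.sub_apply, Pi.single_eq_same, ← Nat.mul_factorial_pred hi, mul_assoc]
  congr 2
  exact prod_congr rfl fun j hj => by
    rw [Pi.sub_apply, Pi.single_eq_of_ne (by simpa using (mem_sdiff.1 hj).2), Nat.sub_zero]

theorem bijOn_removeRoot (hs : ECDCounts s M z m) {i j : ℕ} (hj : j < z) (hi : s i ≠ 0) :
    Set.BijOn (removeRoot j) {f ∈ forestSet s | rootDeg f j = i}
      (forestSet (s - δ i)) := by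
  have hlen_f : ∀ f ∈ forestSet s, j < f.length := fun f hf => by
    rw [length_eq_of_mem_forestSet hs hf]; exact hj
  have hlen_g : ∀ g ∈ forestSet (s - δ i), j + i ≤ g.length := fun g hg => by
    rw [length_eq_of_mem_forestSet (hs.sub_single (by omega) hi) hg]; omega
  refine Set.InvOn.bijOn (f' := graftRoot j i) ⟨?_, ?_⟩ ?_ ?_
  · rintro f ⟨hf, rfl⟩
    exact graftRoot_removeRoot (hlen_f f hf)
  · intro g hg
    exact removeRoot_graftRoot (hlen_g g hg)
  · rintro f ⟨hf, rfl⟩ k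
    have h := ecdF_graftRoot (g := removeRoot j f) (j := j) (i := rootDeg f j)
      (by rw [length_removeRoot (hlen_f f hf)]; have := hlen_f f hf; omega) k
    rw [graftRoot_removeRoot (hlen_f f hf), hf k, ← sub_single_add_single hi] at h
    simpa using h.symm
  · intro g hg
    refine ⟨fun k => ?_, rootDeg_graftRoot (hlen_g g hg)⟩
    rw [ecdF_graftRoot (hlen_g g hg), hg k, ← Pi.add_apply, sub_single_add_single hi]

lemma rootDeg_lt (hs : ECDCounts s M z m) {f : List PlaneTree} (hf : f ∈ forestSet s) {j : ℕ}
    (hj : j < z) : rootDeg f j < M :=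
  hs.lt_of_ne_zero (apply_rootDeg_ne_zero hf (by rwa [length_eq_of_mem_forestSet hs hf]))

lemma ECDCounts.eq_zero (hs : ECDCounts s M z 0) : s = 0 := by
  obtain ⟨hsupp, hm, -⟩ := hs
  funext i
  by_cases hi : i < M
  · exact (sum_eq_zero_iff.1 hm.symm) i (mem_range.2 hi)
  · exact hsupp i (by omega)

lemma forestSet_zero : forestSet 0 = {[]} := by
  ext f
  refine ⟨fun hf => ?_, fun hf i => by simp [Set.mem_singleton_iff.1 hf, ecdF]⟩
  by_contra hne
  exact apply_rootDeg_ne_zero hf (j := 0) (List.length_pos_iff.2 hne) rfl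

lemma forestSet_eq_empty_of_roots_zero (hs : ECDCounts s M 0 m) (hm : 0 < m) :
    forestSet s = ∅ := by
  refine Set.eq_empty_of_forall_notMem fun f hf => ?_
  obtain rfl : f = [] := List.length_eq_zero_iff.1 (length_eq_of_mem_forestSet hs hf)
  have hs0 : s = 0 := funext fun i => by simpa [ecdF] using (hf i).symm
  obtain ⟨-, hmass, -⟩ := hs
  simp [hs0] at hmass
  omega

lemma setOf_rootDeg_eq_empty (hs : ECDCounts s M z m) {i j : ℕ} (hj : j < z) (hi : s i = 0) :
    {f ∈ forestSet s | rootDeg f j = i} = ∅ :=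
  Set.eq_empty_of_forall_notMem fun f ⟨hf, hfi⟩ =>
    apply_rootDeg_ne_zero hf (by rwa [length_eq_of_mem_forestSet hs hf]) (hfi ▸ hi)

theorem forestSet_finite (hs : ECDCounts s M z m) : (forestSet s).Finite := by
  induction m using Nat.strong_induction_on generalizing s z with
  | _ m ih =>
  rcases Nat.eq_zero_or_pos z with rfl | hz
  · exact (Set.finite_singleton []).subset fun f hf =>
      List.length_eq_zero_iff.1 (length_eq_of_mem_forestSet hs hf)
  have hcover : forestSet s ⊆ ⋃ i ∈ range M, {f ∈ forestSet s | rootDeg f 0 = i} :=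
    fun f hf => Set.mem_biUnion (mem_range.2 (rootDeg_lt hs hf hz)) ⟨hf, rfl⟩
  refine (Set.Finite.biUnion (range M).finite_toSet fun i _ => ?_).subset hcover
  by_cases hi : s i = 0
  · rw [setOf_rootDeg_eq_empty hs hz hi]
    exact Set.finite_empty
  · have hbij := bijOn_removeRoot hs hz hi
    have hm : m - 1 < m := by have := hs.2.2; omega
    exact (hbij.image_eq ▸ ih (m - 1) hm (hs.sub_single hz hi)).of_finite_image hbij.injOn

lemma ncard_rootDeg_mul_prod_factorial (hs : ECDCounts s M z m) {j : ℕ} (hj : j < z) (i : ℕ) :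
    {f ∈ forestSet s | rootDeg f j = i}.ncard * ∏ k ∈ range M, (s k)!
      = s i * ((forestSet (s - δ i)).ncard * ∏ k ∈ range M, ((s - δ i) k)!) := by
  by_cases hi : s i = 0
  · simp [setOf_rootDeg_eq_empty hs hj hi, hi]
  · rw [(bijOn_removeRoot hs hj hi).ncard_eq,
      prod_factorial_eq_mul_prod_factorial_sub_single (hs.lt_of_ne_zero hi) hi]
    ring

lemma ncard_eq_sum_ncard_fiber {α β : Type*} {S : Set α} (hS : S.Finite) {g : α → β}
    {t : Finset β} (h : ∀ a ∈ S, g a ∈ t) :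
    S.ncard = ∑ b ∈ t, {a ∈ S | g a = b}.ncard := by
  rw [Set.ncard_eq_toFinset_card S hS,
    card_eq_sum_card_fiberwise fun a ha => h a (hS.mem_toFinset.1 ha)]
  refine sum_congr rfl fun b _ => ?_
  rw [← Set.ncard_coe_finset]
  congr 1
  ext a
  simp

lemma ncard_forestSet_mul_prod_factorial_eq_sum (hs : ECDCounts s M z m) (hz : 0 < z) :
    (forestSet s).ncard * ∏ k ∈ range M, (s k)!
      = ∑ i ∈ range M, s i * ((forestSet (s - δ i)).ncard * ∏ k ∈ range M, ((s - δ i) k)!) := by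
  rw [ncard_eq_sum_ncard_fiber (forestSet_finite hs) (g := fun f => rootDeg f 0)
    fun f hf => mem_range.2 (rootDeg_lt hs hf hz), sum_mul]
  exact sum_congr rfl fun i _ => ncard_rootDeg_mul_prod_factorial hs hz i

lemma ECDCounts.sum_mul_sub_one_add (hs : ECDCounts s M z m) (hz : 0 < z) :
    ∑ i ∈ range M, s i * (z - 1 + i) = z * (m - 1) := by
  obtain ⟨-, hm, hzm⟩ := hs
  have hsplit :
      ∑ i ∈ range M, s i * (z - 1 + i) = (z - 1) * m + ∑ i ∈ range M, i * s i := by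
    rw [hm, mul_sum, ← sum_add_distrib]
    exact sum_congr rfl fun i _ => by ring
  obtain ⟨z, rfl⟩ : ∃ z', z = z' + 1 := ⟨z - 1, by omega⟩
  rw [hsplit, hzm,
    show z + 1 + ∑ i ∈ range M, i * s i - 1 = z + ∑ i ∈ range M, i * s i by omega,
    Nat.add_sub_cancel]
  ring

theorem ncard_forestSet_mul_prod_factorial (hs : ECDCounts s M z m) (hm : 0 < m) :
    (forestSet s).ncard * ∏ i ∈ range M, (s i)! = z * (m - 1)! := by
  induction m using Nat.strong_induction_on generalizing s z with
  | _ m ih =>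
  rcases Nat.eq_zero_or_pos z with rfl | hz
  · simp [forestSet_eq_empty_of_roots_zero hs hm]
  rw [ncard_forestSet_mul_prod_factorial_eq_sum hs hz]
  rcases (show m = 1 ∨ 2 ≤ m by omega) with rfl | hm2
  · have hterm : ∀ i, s i * ((forestSet (s - δ i)).ncard * ∏ k ∈ range M, ((s - δ i) k)!)
        = s i := fun i => by
      by_cases hi : s i = 0
      · simp [hi]
      · rw [(hs.sub_single hz hi).eq_zero, forestSet_zero]
        simp
    have hz1 : z = 1 := by have := hs.2.2; omega
    rw [sum_congr rfl fun i _ => hterm i, ← hs.2.1, hz1, Nat.sub_self, Nat.factorial_zero]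
  · have hterm : ∀ i, s i * ((forestSet (s - δ i)).ncard * ∏ k ∈ range M, ((s - δ i) k)!)
        = s i * (z - 1 + i) * (m - 2)! := fun i => by
      by_cases hi : s i = 0
      · simp [hi]
      · rw [ih (m - 1) (by omega) (hs.sub_single hz hi) (by omega),
          show m - 1 - 1 = m - 2 by omega, mul_assoc]
    rw [sum_congr rfl fun i _ => hterm i, ← sum_mul, hs.sum_mul_sub_one_add hz, mul_assoc,
      show m - 2 = m - 1 - 1 by omega, Nat.mul_factorial_pred (by omega)]

lemma ncard_rootDeg_pair_mul_prod_factorial_eq_mul (hs : ECDCounts s M z m)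
    {i₁ i₂ j₁ j₂ : ℕ} (hj : j₁ < j₂) (hj₂ : j₂ < z) (hii : i₁ ≠ i₂) :
    {f ∈ forestSet s | rootDeg f j₁ = i₁ ∧ rootDeg f j₂ = i₂}.ncard
        * ∏ k ∈ range M, (s k)!
      = s i₁ * s i₂ * ((forestSet (s - δ i₂ - δ i₁)).ncard
          * ∏ k ∈ range M, ((s - δ i₂ - δ i₁) k)!) := by
  have hset : {f ∈ forestSet s | rootDeg f j₁ = i₁ ∧ rootDeg f j₂ = i₂}
      = {f ∈ forestSet s | rootDeg f j₂ = i₂} ∩ {f | rootDeg f j₁ = i₁} := by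
    ext f
    simp only [Set.mem_inter_iff, Set.mem_ofPred_eq]
    tauto
  by_cases hi₂ : s i₂ = 0
  · rw [hset, setOf_rootDeg_eq_empty hs hj₂ hi₂]
    simp [hi₂]
  have hbij := (bijOn_removeRoot hs hj₂ hi₂).inter_mapsTo (s₂ := {f | rootDeg f j₁ = i₁})
    (t₂ := {g | rootDeg g j₁ = i₁}) (fun f hf => (rootDeg_removeRoot_of_lt hj).trans hf)
    (fun f hf => (rootDeg_removeRoot_of_lt hj).symm.trans hf.2)
  have hfiber := ncard_rootDeg_mul_prod_factorial (hs.sub_single (by omega) hi₂)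
    (j := j₁) (by omega) i₁
  rw [hset, hbij.ncard_eq, Set.inter_ofPred_eq_sep,
    prod_factorial_eq_mul_prod_factorial_sub_single (hs.lt_of_ne_zero hi₂) hi₂, mul_left_comm,
    hfiber]
  simp [hii]
  ring

lemma ncard_rootDeg_pair_mul_prod_factorial (hs : ECDCounts s M z m) (hm : 3 ≤ m)
    {i₁ i₂ j₁ j₂ : ℕ} (hj : j₁ < j₂) (hj₂ : j₂ < z) (hii : i₁ ≠ i₂) :
    {f ∈ forestSet s | rootDeg f j₁ = i₁ ∧ rootDeg f j₂ = i₂}.ncard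
        * (∏ k ∈ range M, (s k)!) * ((m - 1) * (m - 2))
      = (z - 2 + i₁ + i₂) * s i₁ * s i₂ * (m - 1)! := by
  rw [ncard_rootDeg_pair_mul_prod_factorial_eq_mul hs hj hj₂ hii]
  rcases eq_or_ne (s i₁ * s i₂) 0 with h | h
  · rcases mul_eq_zero.1 h with h | h <;> simp [h]
  obtain ⟨h₁, h₂⟩ := mul_ne_zero_iff.1 h
  have hs₂₁ := (hs.sub_single (by omega) h₂).sub_single (by omega) (i := i₁)
    (by simpa [hii] using h₁)
  have hfac : (m - 1)! = (m - 1) * (m - 2) * (m - 3)! := by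
    obtain ⟨k, rfl⟩ : ∃ k, m = k + 3 := ⟨m - 3, by omega⟩
    simp [Nat.factorial_succ]
    ring
  rw [ncard_forestSet_mul_prod_factorial hs₂₁ (by omega),
    show z - 1 + i₂ - 1 + i₁ = z - 2 + i₁ + i₂ by omega,
    show m - 1 - 1 - 1 = m - 3 by omega, hfac]
  ring

end ECDCounts

end Paper.PlaneTree

open Paper Paper.PlaneTree in
/-- joint law of the children counts of two roots of a uniform forest. -/
theorem forest_two_roots_joint (s : ℕ → ℕ) (M z m : ℕ)
    (hsupp : ∀ i, M ≤ i → s i = 0)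
    (hm : m = ∑ i ∈ Finset.range M, s i)
    (hz : m = z + ∑ i ∈ Finset.range M, i * s i)
    (hz2 : 2 ≤ z) (hm3 : 3 ≤ m)
    (j₁ j₂ : ℕ) (hj₁ : j₁ < z) (hj₂ : j₂ < z) (hjj : j₁ ≠ j₂)
    (i₁ i₂ : ℕ) (hii : i₁ ≠ i₂) :
    {f ∈ forestSet s | rootDeg f j₁ = i₁ ∧ rootDeg f j₂ = i₂}.ncard
        * (z * (m - 1) * (m - 2))
      = (z - 2 + i₁ + i₂) * s i₁ * s i₂ * (forestSet s).ncard := by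
  wlog hj : j₁ < j₂ generalizing j₁ j₂ i₁ i₂ with H
  · have hswap : {f ∈ forestSet s | rootDeg f j₁ = i₁ ∧ rootDeg f j₂ = i₂}
        = {f ∈ forestSet s | rootDeg f j₂ = i₂ ∧ rootDeg f j₁ = i₁} :=
      Set.ext fun _ => and_congr_right fun _ => and_comm
    rw [hswap, H j₂ j₁ hj₂ hj₁ hjj.symm i₂ i₁ hii.symm (by omega)]
    ring
  have hs : ECDCounts s M z m := ⟨hsupp, hm, hz⟩
  have hP : 0 < ∏ k ∈ range M, (s k)! := prod_pos fun k _ => Nat.factorial_pos _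
  refine Nat.eq_of_mul_eq_mul_right hP ?_
  calc _ = {f ∈ forestSet s | rootDeg f j₁ = i₁ ∧ rootDeg f j₂ = i₂}.ncard
          * (∏ k ∈ range M, (s k)!) * ((m - 1) * (m - 2)) * z := by ring
    _ = (z - 2 + i₁ + i₂) * s i₁ * s i₂
          * ((forestSet s).ncard * ∏ k ∈ range M, (s k)!) := by
      rw [ncard_rootDeg_pair_mul_prod_factorial hs hm3 hj hj₂ hii,
        ncard_forestSet_mul_prod_factorial hs (by omega)]
      ring
    _ = _ := by ring
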